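/- (Appendix computation: kernel of $\partial$ on the local model.) Work formally with coordinates $y_1, \ldots, y_d$ and $x_1, \ldots, x_c$. Consider the free module with basis elements $a_{J,K}(y)\,((dx_K \wedge dy_J)^* \cdot dy)\, \partial_x^{K'}$, where $J \subseteq \{1,\ldots,d\}$, $K \subseteq \{1,\ldots,c\}$, $K'$ a multi-index in the $x$-variables, and $a_{J,K}$ depends only on $y$. Define the right action of $\partial = \sum_k (dx_k \wedge) \partial_{x_k} + \sum_j (dy_j \wedge) \partial_{y_j}$ by the formula (A3) of the paper. Then an element killed by right multiplication by $\partial$ and involving no $\partial_x^{K'}$ factors must have $a_{J,K} = 0$ whenever $K \neq \emptyset$, and the only elements of the form $a(y)\,(dy^* \cdot dy)$ killed by $\partial$ are those with $a$ constant. -/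

import Mathlib

/-!
The `∂_{x_k}`-component of `a · ∂` has coefficients `± a_{J, K ∪ {k}}`, so every coefficient with
`K ≠ ∅` vanishes. With `K = ∅` and `J = {i}ᶜ`, the `dy`-component reduces to a single term
`± ∂a_{univ, ∅}/∂y_i`; all partial derivatives of `a_{univ, ∅}` vanish, so it is constant.
-/

/-- The sign `sgn(k, S)` of moving the index `k` past the elements of `S` below it. -/
def moveSign {m : ℕ} (k : Fin m) (S : Finset (Fin m)) : ℤ :=
  (-1) ^ ((S.filter fun j => j < k).card)

open Finset

lemma isUnit_moveSign {m : ℕ} (k : Fin m) (S : Finset (Fin m)) : IsUnit (moveSign k S) :=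
  isUnit_neg_one.pow _

lemma MvPolynomial.eq_C_of_pderiv_eq_zero {σ R : Type*} [CommRing R] [IsAddTorsionFree R]
    {p : MvPolynomial σ R} (h : ∀ i, pderiv i p = 0) : p = C (coeff 0 p) := by
  rw [← MvPolynomial.coe_inj, coe_C]
  refine MvPowerSeries.pderiv.ext (fun i => ?_) ?_
  · rw [MvPowerSeries.pderiv_coe, h i, coe_zero, MvPowerSeries.pderiv_C]
  · rw [MvPowerSeries.constantCoeff_C, ← MvPowerSeries.coeff_zero_eq_constantCoeff_apply,
      coeff_coe]

/-- Appendix computation.  An element of the local model is a combination of basis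
elements `(dx_K ∧ dy_J)^* · dy` with coefficients `a_{J,K}(y)` (formal functions of
`y`, here polynomials), with no `∂_x^{K'}` factors.  Right multiplication by
`∂` has (by formula (A3)) a `dy`-component and a `∂_{x_k}`-component; expressing that
both vanish (hypotheses `hDy`, `hDx`), one concludes: `a_{J,K} = 0` whenever
`K ≠ ∅`, and an element of the form `a(y) (dy^* · dy)` killed by `∂` has `a`
constant. -/
theorem appendix_kernel_computation (d c : ℕ)
    (a : Finset (Fin d) × Finset (Fin c) → MvPolynomial (Fin d) ℂ)
    (hDy : ∀ (J : Finset (Fin d)) (K : Finset (Fin c)),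
      ∑ j ∈ Jᶜ, (((-1 : ℤ) ^ (K.card - 1) * moveSign j J) •
        MvPolynomial.pderiv j (a (insert j J, K))) = 0)
    (hDx : ∀ (J : Finset (Fin d)) (K : Finset (Fin c)) (kk : Fin c), kk ∉ K →
      moveSign kk K • a (J, insert kk K) = 0) :
    (∀ (J : Finset (Fin d)) (K : Finset (Fin c)), K.Nonempty → a (J, K) = 0) ∧
    ((∀ (J : Finset (Fin d)) (K : Finset (Fin c)),
        (J, K) ≠ (Finset.univ, (∅ : Finset (Fin c))) → a (J, K) = 0) →
      ∃ r : ℂ, a (Finset.univ, ∅) = MvPolynomial.C r) := by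
  refine ⟨fun J K ⟨k, hk⟩ => ?_, fun _ => ⟨_, MvPolynomial.eq_C_of_pderiv_eq_zero fun i => ?_⟩⟩
  · have h := hDx J (K.erase k) k (K.notMem_erase k)
    rw [insert_erase hk] at h
    exact (isUnit_moveSign k _).smul_eq_zero.mp h
  · have h := hDy {i}ᶜ ∅
    rw [compl_compl, sum_singleton, insert_compl_self] at h
    exact ((isUnit_neg_one.pow _).mul (isUnit_moveSign i _)).smul_eq_zero.mp h
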